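/- arXiv:1905.11891 — 2 statements merged into one kernel-verified Lean document; each statement's English description precedes it below -/
import Mathlib

section
/- For p, q, r, s, a, b ∈ {0,…,2^n−1}, the structure constants f^{r,s}_{p,q} = i^{r·q − p·s} (−1)^{(s XOR q)·(p AND r) + (p XOR r)·(q AND s)} satisfy the triple-product identity f^{r,s}_{p XOR a, q XOR b} = f^{r,s}_{p,q} · f^{r,s}_{a,b} · g, where g = (−1)^{(r XOR s)·(p XOR q)·(a XOR b) + r·a·p + s·b·q} and x·y·z counts bit positions where all three of x, y, z have bit 1. -/
/-- Bitwise inner product: number of bit positions among the first `m`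
where both `a` and `b` have bit 1. -/
def bdot (m a b : ℕ) : ℕ := ∑ i ∈ Finset.range m, ((a &&& b).testBit i).toNat

/-- The structure constant `f^{r,s}_{p,q} =
i^{r·q − p·s} · (−1)^{(s XOR q)·(p AND r) + (p XOR r)·(q AND s)}`. -/
noncomputable def scf (m p q r s : ℕ) : ℂ :=
  Complex.I ^ ((bdot m r q : ℤ) - (bdot m p s : ℤ)) *
    (-1 : ℂ) ^ (bdot m (s ^^^ q) (p &&& r) + bdot m (p ^^^ r) (q &&& s))

/-- Triple bitwise inner product: number of bit positions among the first `m`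
where all three of `a`, `b`, `c` have bit 1. -/
def tdot (m a b c : ℕ) : ℕ := ∑ i ∈ Finset.range m, ((a &&& b &&& c).testBit i).toNat

/-- Per-bit version of the structure constant. -/
noncomputable def Fb (pb qb rb sb : Bool) : ℂ :=
  Complex.I ^ (rb && qb).toNat * (-Complex.I) ^ (pb && sb).toNat *
    (-1 : ℂ) ^ (((sb ^^ qb) && (pb && rb)).toNat + ((pb ^^ rb) && (qb && sb)).toNat)

lemma Fb_triple (pb qb rb sb ab bb : Bool) :
    Fb (pb ^^ ab) (qb ^^ bb) rb sb
      = Fb pb qb rb sb * Fb ab bb rb sb *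
        (-1 : ℂ) ^ ((((rb ^^ sb) && (pb ^^ qb)) && (ab ^^ bb)).toNat
          + ((rb && ab) && pb).toNat + ((sb && bb) && qb).toNat) := by
  cases pb <;> cases qb <;> cases rb <;> cases sb <;> cases ab <;> cases bb <;>
    simp [Fb]

lemma scf_eq_prod (m p q r s : ℕ) :
    scf m p q r s = ∏ i ∈ Finset.range m,
      Fb (p.testBit i) (q.testBit i) (r.testBit i) (s.testBit i) := by
  unfold scf bdot Fb
  rw [zpow_sub₀ Complex.I_ne_zero, zpow_natCast, zpow_natCast, div_eq_mul_inv,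
    ← inv_pow, Complex.inv_I, pow_add, ← Finset.prod_pow_eq_pow_sum,
    ← Finset.prod_pow_eq_pow_sum, ← Finset.prod_pow_eq_pow_sum, ← Finset.prod_pow_eq_pow_sum,
    ← Finset.prod_mul_distrib, ← Finset.prod_mul_distrib, ← Finset.prod_mul_distrib]
  refine Finset.prod_congr rfl fun i _ => ?_
  simp [Nat.testBit_and, Nat.testBit_xor, pow_add]

theorem gamma_triple_product (n p q r s a b : ℕ)
    (hp : p < 2 ^ n) (hq : q < 2 ^ n) (hr : r < 2 ^ n) (hs : s < 2 ^ n)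
    (ha : a < 2 ^ n) (hb : b < 2 ^ n) :
    scf n (p ^^^ a) (q ^^^ b) r s
      = scf n p q r s * scf n a b r s *
        (-1 : ℂ) ^ (tdot n (r ^^^ s) (p ^^^ q) (a ^^^ b) + tdot n r a p + tdot n s b q) := by
  rw [scf_eq_prod, scf_eq_prod, scf_eq_prod]
  unfold tdot
  rw [pow_add, pow_add, ← Finset.prod_pow_eq_pow_sum, ← Finset.prod_pow_eq_pow_sum,
    ← Finset.prod_pow_eq_pow_sum, ← Finset.prod_mul_distrib, ← Finset.prod_mul_distrib,
    ← Finset.prod_mul_distrib, ← Finset.prod_mul_distrib]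
  refine Finset.prod_congr rfl fun i _ => ?_
  simp only [Nat.testBit_xor, Nat.testBit_and]
  rw [Fb_triple]
  ring
end

section
/- The triple-product correction factor g(p,q,a,b,r,s) = (−1)^{(r XOR s)·(p XOR q)·(a XOR b) + r·a·p + s·b·q} is symmetric under exchanging any two of the three pairs (r,s), (p,q), (a,b); in particular g(p,q,a,b,r,s) = g(a,b,p,q,r,s) = g(r,s,a,b,p,q). -/
/-- The triple-product correction factor
`g(p,q,a,b,r,s) = (−1)^{(r XOR s)·(p XOR q)·(a XOR b) + r·a·p + s·b·q}`. -/
noncomputable def gfac (n p q a b r s : ℕ) : ℂ :=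
  (-1 : ℂ) ^ (tdot n (r ^^^ s) (p ^^^ q) (a ^^^ b) + tdot n r a p + tdot n s b q)

lemma tdot_swap23 (m a b c : ℕ) : tdot m a b c = tdot m a c b := by
  unfold tdot
  have : a &&& b &&& c = a &&& c &&& b := by
    apply Nat.eq_of_testBit_eq
    intro i
    simp only [Nat.testBit_and]
    rw [Bool.and_assoc, Bool.and_assoc, Bool.and_comm (b.testBit i)]
  rw [this]

lemma tdot_swap12 (m a b c : ℕ) : tdot m a b c = tdot m b a c := by
  unfold tdot
  have : a &&& b &&& c = b &&& a &&& c := by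
    apply Nat.eq_of_testBit_eq
    intro i
    simp only [Nat.testBit_and]
    rw [Bool.and_comm (a.testBit i)]
  rw [this]

lemma tdot_swap13 (m a b c : ℕ) : tdot m a b c = tdot m c b a := by
  rw [tdot_swap12, tdot_swap23, tdot_swap12]

theorem gfac_symmetric (n p q a b r s : ℕ)
    (hp : p < 2 ^ n) (hq : q < 2 ^ n) (ha : a < 2 ^ n) (hb : b < 2 ^ n)
    (hr : r < 2 ^ n) (hs : s < 2 ^ n) :
    gfac n p q a b r s = gfac n a b p q r s ∧
    gfac n p q a b r s = gfac n r s a b p q ∧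
    gfac n p q a b r s = gfac n p q r s a b := by
  refine ⟨?_, ?_, ?_⟩ <;> unfold gfac
  · rw [tdot_swap23 n (r ^^^ s), tdot_swap23 n r a p, tdot_swap23 n s b q]
  · rw [tdot_swap12 n (r ^^^ s), tdot_swap13 n r a p, tdot_swap13 n s b q]
  · rw [tdot_swap13 n (r ^^^ s), tdot_swap12 n r a p, tdot_swap12 n s b q]
end
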